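/- arXiv:2009.09264 — 4 statements merged into one kernel-verified Lean document; each statement's English description precedes it below -/
import Mathlib

section
/- Let f ∈ F₁(a,b) with a ≥ 0, let P be a probability measure on a measurable space (Ω,M), let φ : Ω → ℝ be measurable with φ ∈ L¹(P) and suppose there exist c₊, c₋ > 0 and ν₊, ν₋ ∈ ℝ such that E_P[(f*(c₊φ − ν₊))⁺] < ∞ and E_P[(f*(−c₋φ − ν₋))⁺] < ∞. Then φ ∈ L¹(Q) for every probability measure Q on (Ω,M) with D_f(Q,P) < ∞. -/
open MeasureTheory Filter Set
open scoped ENNReal NNReal Classical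

/-- The positive part of an extended real number, as an element of `ℝ≥0∞`. -/
noncomputable def erealPos (x : EReal) : ℝ≥0∞ := if x = ⊤ then ⊤ else ENNReal.ofReal x.toReal

/-- Extended expectation of an `EReal`-valued function, with the convention `∞ - ∞ = ∞`. -/
noncomputable def feexp {Ω : Type*} [MeasurableSpace Ω] (P : Measure Ω) (g : Ω → EReal) : EReal :=
  if ∫⁻ x, erealPos (g x) ∂P = ⊤ then ⊤
  else ((∫⁻ x, erealPos (g x) ∂P).toReal : EReal) - ((∫⁻ x, erealPos (-(g x)) ∂P : ℝ≥0∞) : EReal)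

/-- The extension of a convex function `f : (a,b) → ℝ` to a convex, lower semicontinuous
function `ℝ → (-∞,∞]`, taking the limiting values at finite endpoints and `∞` outside `[a,b]`. -/
noncomputable def fExt (a b : EReal) (f : ℝ → ℝ) (x : ℝ) : EReal :=
  if a < (x : EReal) ∧ (x : EReal) < b then (f x : EReal)
  else if (x : EReal) = a then limsup (fun t : ℝ => (f t : EReal)) (nhdsWithin x (Ioi x))
  else if (x : EReal) = b then limsup (fun t : ℝ => (f t : EReal)) (nhdsWithin x (Iio x))
  else ⊤

/-- The `f`-divergence `D_f(Q,P) = E_P[f(dQ/dP)]` for `Q ≪ P`, and `∞` otherwise. -/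
noncomputable def fDivg {Ω : Type*} [MeasurableSpace Ω] (a b : EReal) (f : ℝ → ℝ)
    (Q P : Measure Ω) : EReal :=
  if Q ≪ P then feexp P (fun x => fExt a b f ((Q.rnDeriv P) x).toReal) else ⊤

/-- The Legendre transform `f*(y) = sup_{x ∈ (a,b)} {x y - f x}`. -/
noncomputable def legT (a b : EReal) (f : ℝ → ℝ) (y : ℝ) : EReal :=
  ⨆ x : {t : ℝ // a < (t : EReal) ∧ (t : EReal) < b}, ((x.1 * y - f x.1 : ℝ) : EReal)

/-! With `r = dQ/dP` and `y = c φ - ν`, the Fenchel–Young inequality `r y ≤ f(r) + f*(y)` gives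
`E_Q[(c φ - ν)⁺] = E_P[r (c φ - ν)⁺] ≤ E_P[f(r)⁺] + E_P[f*(c φ - ν)⁺] < ∞`, so `φ⁺` is
`Q`-integrable; the same argument with `-c₋ φ - ν₋` handles `φ⁻`. Young's inequality for the
extended `f` is trivial when `f*(y) = ∞`; otherwise the affine function `t ↦ t y - f*(y)`
minorizes `f` on `(a,b)`, hence also its limits at the endpoints. -/

open Topology

lemma erealPos_coe (z : ℝ) : erealPos (z : EReal) = ENNReal.ofReal z := by
  simp [erealPos]

lemma erealPos_mono : Monotone erealPos := by
  intro u v huv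
  unfold erealPos
  rcases eq_or_ne v ⊤ with hv | hv
  · simp [hv]
  · rw [if_neg hv, if_neg (fun h : u = ⊤ => hv (top_le_iff.1 (h ▸ huv)))]
    rcases eq_or_ne u ⊥ with hu | hu
    · simp [hu]
    · exact ENNReal.ofReal_le_ofReal (EReal.toReal_le_toReal huv hu hv)

lemma erealPos_add_le (u v : EReal) : erealPos (u + v) ≤ erealPos u + erealPos v := by
  induction u with
  | bot => simp [erealPos]
  | coe x =>
    induction v with
    | bot => simp [erealPos]
    | coe y =>
      rw [← EReal.coe_add, erealPos_coe, erealPos_coe, erealPos_coe]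
      exact ENNReal.ofReal_add_le
    | top => simp [erealPos]
  | top =>
    induction v with
    | bot => simp [erealPos]
    | coe y => simp [erealPos, EReal.top_add_of_ne_bot (EReal.coe_ne_bot y)]
    | top => simp [erealPos]

lemma measurable_erealPos : Measurable erealPos :=
  Measurable.ite measurableSet_eq measurable_const
    (ENNReal.measurable_ofReal.comp measurable_ereal_toReal)

lemma coe_le_limsup_coe_of_tendsto {F : Filter ℝ} [F.NeBot] {u v : ℝ → ℝ} {c : ℝ}
    (hu : Tendsto u F (𝓝 c)) (huv : u ≤ᶠ[F] v) :
    (c : EReal) ≤ limsup (fun t => (v t : EReal)) F := by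
  rw [← ((continuous_coe_real_ereal.tendsto c).comp hu).limsup_eq]
  exact limsup_le_limsup (huv.mono fun t ht => EReal.coe_le_coe_iff.2 ht)

section Young

variable {a b : EReal} {f : ℝ → ℝ}

lemma le_fExt_of_continuous_le (hab : a < b) {g : ℝ → ℝ} (hg : Continuous g)
    (hgf : ∀ t : ℝ, a < t → (t : EReal) < b → g t ≤ f t) (r : ℝ) :
    (g r : EReal) ≤ fExt a b f r := by
  have hcoe := continuous_coe_real_ereal.tendsto r
  unfold fExt
  split_ifs with hr hra hrb
  · exact EReal.coe_le_coe_iff.2 (hgf r hr.1 hr.2)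
  · refine coe_le_limsup_coe_of_tendsto (hg.tendsto r |>.mono_left nhdsWithin_le_nhds) ?_
    filter_upwards [self_mem_nhdsWithin,
      nhdsWithin_le_nhds (hcoe.eventually (Iio_mem_nhds (hra ▸ hab)))] with t hrt htb
    exact hgf t (hra ▸ EReal.coe_lt_coe_iff.2 hrt) htb
  · refine coe_le_limsup_coe_of_tendsto (hg.tendsto r |>.mono_left nhdsWithin_le_nhds) ?_
    filter_upwards [self_mem_nhdsWithin,
      nhdsWithin_le_nhds (hcoe.eventually (Ioi_mem_nhds (hrb ▸ hab)))] with t htr hat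
    exact hgf t hat (hrb ▸ EReal.coe_lt_coe_iff.2 htr)
  · exact le_top

lemma le_legT {t : ℝ} (ht : a < (t : EReal) ∧ (t : EReal) < b) (y : ℝ) :
    ((t * y - f t : ℝ) : EReal) ≤ legT a b f y :=
  le_iSup (fun x : {t : ℝ // a < (t : EReal) ∧ (t : EReal) < b} =>
    ((x.1 * y - f x.1 : ℝ) : EReal)) ⟨t, ht⟩

lemma legT_ne_bot (hab : a < b) (y : ℝ) : legT a b f y ≠ ⊥ := by
  obtain ⟨t, hat, htb⟩ := EReal.lt_iff_exists_real_btwn.1 hab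
  exact ne_bot_of_le_ne_bot (EReal.coe_ne_bot _) (le_legT (f := f) ⟨hat, htb⟩ y)

lemma coe_mul_le_fExt_add_legT (hab : a < b) {y : ℝ} (hy : legT a b f y ≠ ⊤) (r : ℝ) :
    ((r * y : ℝ) : EReal) ≤ fExt a b f r + legT a b f y := by
  obtain ⟨L, hL⟩ : ∃ L : ℝ, (L : EReal) = legT a b f y :=
    ⟨_, EReal.coe_toReal hy (legT_ne_bot hab y)⟩
  have hminor : ∀ t : ℝ, a < t → (t : EReal) < b → t * y - L ≤ f t := fun t hat htb => by
    have := le_legT (f := f) ⟨hat, htb⟩ y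
    rw [← hL, EReal.coe_le_coe_iff] at this
    linarith
  calc ((r * y : ℝ) : EReal) = ((r * y - L : ℝ) : EReal) + L := by
        rw [← EReal.coe_add, sub_add_cancel]
    _ ≤ fExt a b f r + legT a b f y := by
        rw [hL]
        exact add_le_add_left
          (le_fExt_of_continuous_le hab (g := fun t => t * y - L) (by fun_prop) hminor r) _

lemma ofReal_mul_le_erealPos_fExt_add_erealPos_legT (hab : a < b) (r y : ℝ) :
    ENNReal.ofReal (r * y) ≤ erealPos (fExt a b f r) + erealPos (legT a b f y) := by
  rcases eq_or_ne (legT a b f y) ⊤ with hy | hy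
  · simp [hy, erealPos]
  · rw [← erealPos_coe]
    exact (erealPos_mono (coe_mul_le_fExt_add_legT hab hy r)).trans (erealPos_add_le _ _)

lemma measurable_legT : Measurable (legT a b f) :=
  (lowerSemicontinuous_iSup fun _ =>
    (continuous_coe_real_ereal.comp (by fun_prop)).lowerSemicontinuous).measurable

end Young

section Divergence

variable {Ω : Type*} [MeasurableSpace Ω] {a b : EReal} {f : ℝ → ℝ} {P Q : Measure Ω}

lemma absolutelyContinuous_of_fDivg_lt_top (h : fDivg a b f Q P < ⊤) : Q ≪ P := by
  by_contra hQP
  rw [fDivg, if_neg hQP] at h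
  exact lt_irrefl _ h

lemma lintegral_erealPos_fExt_ne_top_of_fDivg_lt_top (h : fDivg a b f Q P < ⊤) :
    ∫⁻ x, erealPos (fExt a b f (Q.rnDeriv P x).toReal) ∂P ≠ ⊤ := by
  intro htop
  rw [fDivg, if_pos (absolutelyContinuous_of_fDivg_lt_top h), feexp, if_pos htop] at h
  exact lt_irrefl _ h

lemma lintegral_ofReal_lt_top_of_fDivg_lt_top [SigmaFinite Q] [Q.HaveLebesgueDecomposition P]
    (hab : a < b) (hD : fDivg a b f Q P < ⊤) {g : Ω → ℝ} (hg : Measurable g)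
    (hint : ∫⁻ x, erealPos (legT a b f (g x)) ∂P < ⊤) :
    ∫⁻ x, ENNReal.ofReal (g x) ∂Q < ⊤ := by
  have hyoung : ∀ᵐ x ∂P, Q.rnDeriv P x * ENNReal.ofReal (g x)
      ≤ erealPos (fExt a b f (Q.rnDeriv P x).toReal) + erealPos (legT a b f (g x)) := by
    filter_upwards [Q.rnDeriv_lt_top P] with x hx
    rw [← ENNReal.ofReal_toReal hx.ne, ← ENNReal.ofReal_mul ENNReal.toReal_nonneg,
      ENNReal.toReal_ofReal ENNReal.toReal_nonneg]
    exact ofReal_mul_le_erealPos_fExt_add_erealPos_legT hab _ _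
  calc ∫⁻ x, ENNReal.ofReal (g x) ∂Q
      = ∫⁻ x, Q.rnDeriv P x * ENNReal.ofReal (g x) ∂P :=
        (lintegral_rnDeriv_mul (absolutelyContinuous_of_fDivg_lt_top hD)
          hg.ennreal_ofReal.aemeasurable).symm
    _ ≤ ∫⁻ x, (erealPos (fExt a b f (Q.rnDeriv P x).toReal)
          + erealPos (legT a b f (g x))) ∂P := lintegral_mono_ae hyoung
    _ = ∫⁻ x, erealPos (fExt a b f (Q.rnDeriv P x).toReal) ∂P
          + ∫⁻ x, erealPos (legT a b f (g x)) ∂P :=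
        lintegral_add_right _ (measurable_erealPos.comp (measurable_legT.comp hg))
    _ < ⊤ := ENNReal.add_lt_top.2
        ⟨(lintegral_erealPos_fExt_ne_top_of_fDivg_lt_top hD).lt_top, hint⟩

end Divergence

lemma lintegral_ofReal_lt_top_of_lintegral_ofReal_mul_sub_lt_top {Ω : Type*}
    [MeasurableSpace Ω] {μ : Measure Ω} [IsFiniteMeasure μ] {g : Ω → ℝ} {c ν : ℝ} (hc : 0 < c)
    (h : ∫⁻ x, ENNReal.ofReal (c * g x - ν) ∂μ < ⊤) :
    ∫⁻ x, ENNReal.ofReal (g x) ∂μ < ⊤ := by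
  have hle : ∀ x, ENNReal.ofReal (g x)
      ≤ ENNReal.ofReal c⁻¹ * ENNReal.ofReal (c * g x - ν) + ENNReal.ofReal (c⁻¹ * ν) := by
    intro x
    calc ENNReal.ofReal (g x) = ENNReal.ofReal (c⁻¹ * (c * g x - ν) + c⁻¹ * ν) := by
          rw [mul_sub, ← mul_assoc, inv_mul_cancel₀ hc.ne', one_mul, sub_add_cancel]
      _ ≤ _ := ENNReal.ofReal_add_le
      _ = _ := by rw [ENNReal.ofReal_mul (inv_nonneg.2 hc.le)]
  calc ∫⁻ x, ENNReal.ofReal (g x) ∂μ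
      ≤ ∫⁻ x, (ENNReal.ofReal c⁻¹ * ENNReal.ofReal (c * g x - ν)
          + ENNReal.ofReal (c⁻¹ * ν)) ∂μ := lintegral_mono hle
    _ = ENNReal.ofReal c⁻¹ * ∫⁻ x, ENNReal.ofReal (c * g x - ν) ∂μ
          + ENNReal.ofReal (c⁻¹ * ν) * μ univ := by
        rw [lintegral_add_right _ measurable_const,
          lintegral_const_mul' _ _ ENNReal.ofReal_ne_top, lintegral_const]
    _ < ⊤ := ENNReal.add_lt_top.2 ⟨ENNReal.mul_lt_top ENNReal.ofReal_lt_top h,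
        ENNReal.mul_lt_top ENNReal.ofReal_lt_top (measure_lt_top μ univ)⟩

lemma enorm_eq_ofReal_add_ofReal_neg (z : ℝ) :
    ‖z‖ₑ = ENNReal.ofReal z + ENNReal.ofReal (-z) := by
  rcases le_total 0 z with h | h
  · simp [Real.enorm_eq_ofReal h, ENNReal.ofReal_of_nonpos (neg_nonpos.2 h)]
  · rw [← enorm_neg, Real.enorm_eq_ofReal (neg_nonneg.2 h), ENNReal.ofReal_of_nonpos h, zero_add]

lemma integrable_of_lintegral_ofReal_lt_top {Ω : Type*} [MeasurableSpace Ω] {μ : Measure Ω}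
    {g : Ω → ℝ} (hg : Measurable g) (hpos : ∫⁻ x, ENNReal.ofReal (g x) ∂μ < ⊤)
    (hneg : ∫⁻ x, ENNReal.ofReal (-g x) ∂μ < ⊤) : Integrable g μ := by
  refine ⟨hg.aestronglyMeasurable, ?_⟩
  simp only [HasFiniteIntegral, enorm_eq_ofReal_add_ofReal_neg]
  rw [lintegral_add_left hg.ennreal_ofReal]
  exact ENNReal.add_lt_top.2 ⟨hpos, hneg⟩

theorem integrable_of_fDiv_lt_top_general {Ω : Type*} [MeasurableSpace Ω]
    {a b : EReal} (ha1 : a < 1) (hb1 : (1 : EReal) < b)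
    {f : ℝ → ℝ}
    (P : Measure Ω) [IsProbabilityMeasure P]
    {φ : Ω → ℝ} (hφm : Measurable φ)
    {cp cm : ℝ} (hcp : 0 < cp) (hcm : 0 < cm) (νp νm : ℝ)
    (hintp : ∫⁻ x, erealPos (legT a b f (cp * φ x - νp)) ∂P < ⊤)
    (hintm : ∫⁻ x, erealPos (legT a b f (-cm * φ x - νm)) ∂P < ⊤) :
    ∀ Q : Measure Ω, IsProbabilityMeasure Q → fDivg a b f Q P < ⊤ → Integrable φ Q := by
  intro Q _ hD
  have hab : a < b := ha1.trans hb1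
  refine integrable_of_lintegral_ofReal_lt_top hφm ?_ ?_
  · exact lintegral_ofReal_lt_top_of_lintegral_ofReal_mul_sub_lt_top hcp
      (lintegral_ofReal_lt_top_of_fDivg_lt_top hab hD (by fun_prop) hintp)
  · have hintm' : ∫⁻ x, erealPos (legT a b f (cm * -φ x - νm)) ∂P < ⊤ := by
      simpa only [mul_neg, neg_mul] using hintm
    exact lintegral_ofReal_lt_top_of_lintegral_ofReal_mul_sub_lt_top hcm
      (lintegral_ofReal_lt_top_of_fDivg_lt_top hab hD (by fun_prop) hintm')

/-- For `f ∈ F₁(a,b)` with `a ≥ 0`, a probability measure `P`, and `φ ∈ L¹(P)` satisfying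
the two-sided integrability condition on `f*`, one has `φ ∈ L¹(Q)` for every probability
measure `Q` with `D_f(Q,P) < ∞`. -/
theorem integrable_of_fDiv_lt_top {Ω : Type*} [MeasurableSpace Ω]
    {a b : EReal} (ha : 0 ≤ a) (ha1 : a < 1) (hb1 : (1 : EReal) < b)
    {f : ℝ → ℝ} (hf : ConvexOn ℝ {t : ℝ | a < (t : EReal) ∧ (t : EReal) < b} f)
    (hf1 : f 1 = 0)
    (P : Measure Ω) [IsProbabilityMeasure P]
    {φ : Ω → ℝ} (hφm : Measurable φ) (hφ1 : Integrable φ P)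
    {cp cm : ℝ} (hcp : 0 < cp) (hcm : 0 < cm) (νp νm : ℝ)
    (hintp : ∫⁻ x, erealPos (legT a b f (cp * φ x - νp)) ∂P < ⊤)
    (hintm : ∫⁻ x, erealPos (legT a b f (-cm * φ x - νm)) ∂P < ⊤) :
    ∀ Q : Measure Ω, IsProbabilityMeasure Q → fDivg a b f Q P < ⊤ → Integrable φ Q :=
  integrable_of_fDiv_lt_top_general ha1 hb1 P hφm hcp hcm νp νm hintp hintm
end

section
/- Let g : ℝⁿ → ℝ be continuous and f : ℝⁿ → (−∞,∞] be convex. Then inf over x ∈ ℝⁿ of g(x) + f(x) equals inf over x in the relative interior of the domain {f < ∞} of g(x) + f(x). -/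
/-!
For `x` in the domain of `f` and `z` in its relative interior, the points `(1 - t) x + t z`,
`0 < t ≤ 1`, lie in the relative interior, and by convexity
`g + f ≤ g((1 - t) x + t z) + (1 - t) f x + t f z` there. As `t → 0` the right-hand side tends
to `g x + f x` by continuity of `g`, so the infimum over the relative interior is at most
`g x + f x`. Points outside the domain contribute `⊤`.
-/

open Filter Set Topology AffineMap

theorem intrinsicInterior_mono_of_affineSpan_eq {𝕜 V P : Type*} [Ring 𝕜] [AddCommGroup V]
    [Module 𝕜 V] [TopologicalSpace P] [AddTorsor V P] {s t : Set P} (hts : t ⊆ s)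
    (hspan : affineSpan 𝕜 t = affineSpan 𝕜 s) :
    intrinsicInterior 𝕜 t ⊆ intrinsicInterior 𝕜 s := by
  unfold intrinsicInterior
  rw [hspan]
  exact image_mono (interior_mono (preimage_mono hts))

theorem AffineSubspace.map_homothety_eq_self {k V P : Type*} [Field k] [AddCommGroup V]
    [Module k V] [AddTorsor V P] {A : AffineSubspace k P} {c : P} (hc : c ∈ A) {r : k}
    (hr : r ≠ 0) : A.map (homothety c r) = A := by
  refine le_antisymm (fun _ ⟨p, hp, hpq⟩ => hpq ▸ homothety_mem hc r hp) fun p hp => ?_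
  refine ⟨homothety c r⁻¹ p, homothety_mem hc r⁻¹ hp, ?_⟩
  simp [← homothety_mul_apply, hr]

def ContinuousAffineEquiv.homothety {R V P : Type*} [CommRing R] [AddCommGroup V]
    [Module R V] [TopologicalSpace V] [ContinuousConstSMul R V] [TopologicalSpace P]
    [AddTorsor V P] [IsTopologicalAddTorsor P] (x : P) (u : Rˣ) : P ≃ᴬ[R] P where
  toAffineEquiv := AffineEquiv.homothetyUnitsMulHom x u
  continuous_toFun := homothety_continuous x (u : R)
  continuous_invFun := homothety_continuous x ((u⁻¹ : Rˣ) : R)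

theorem Convex.lineMap_mem_intrinsicInterior {𝕜 V : Type*} [Field 𝕜] [LinearOrder 𝕜]
    [IsStrictOrderedRing 𝕜] [AddCommGroup V] [Module 𝕜 V] [TopologicalSpace V]
    [IsTopologicalAddGroup V] [ContinuousConstSMul 𝕜 V] {s : Set V} (hs : Convex 𝕜 s)
    {x z : V} (hx : x ∈ s) (hz : z ∈ intrinsicInterior 𝕜 s) {t : 𝕜} (ht : t ∈ Ioc 0 1) :
    lineMap x z t ∈ intrinsicInterior 𝕜 s := by
  let φ := ContinuousAffineEquiv.homothety x (Units.mk0 t ht.1.ne')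
  have hφ : (φ : V → V) = homothety x t := rfl
  have himage : φ '' s ⊆ s := by
    rintro _ ⟨y, hy, rfl⟩
    rw [hφ, homothety_eq_lineMap]
    exact hs.lineMap_mem hx hy ⟨ht.1.le, ht.2⟩
  have hspan : affineSpan 𝕜 (φ '' s) = affineSpan 𝕜 s := by
    rw [hφ, ← AffineSubspace.map_span]
    exact AffineSubspace.map_homothety_eq_self (subset_affineSpan 𝕜 s hx) ht.1.ne'
  refine intrinsicInterior_mono_of_affineSpan_eq himage hspan ?_
  rw [φ.intrinsicInterior_image, ← homothety_eq_lineMap, ← hφ]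
  exact mem_image_of_mem φ hz

theorem convexOn_toReal_setOf_lt_top {V : Type*} [AddCommGroup V] [Module ℝ V] {f : V → EReal}
    (hfbot : ∀ x, f x ≠ ⊥)
    (hfconv : ∀ x y : V, ∀ t : ℝ, 0 ≤ t → t ≤ 1 →
      f (t • x + (1 - t) • y) ≤ (t : EReal) * f x + ((1 - t : ℝ) : EReal) * f y) :
    ConvexOn ℝ {y | f y < ⊤} (fun y => (f y).toReal) := by
  have hcoe : ∀ {y}, f y < ⊤ → f y = (f y).toReal := fun hy =>
    (EReal.coe_toReal hy.ne (hfbot _)).symm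
  have hcombo : ∀ {x y : V} {a b : ℝ}, f x < ⊤ → f y < ⊤ → 0 ≤ a → 0 ≤ b → a + b = 1 →
      f (a • x + b • y) ≤ ((a * (f x).toReal + b * (f y).toReal : ℝ) : EReal) := by
    rintro x y a b hx hy ha hb hab
    obtain rfl : b = 1 - a := by linarith
    have h := hfconv x y a ha (by linarith)
    rwa [hcoe hx, hcoe hy, ← EReal.coe_mul, ← EReal.coe_mul, ← EReal.coe_add] at h
  refine ⟨fun x hx y hy a b ha hb hab => (hcombo hx hy ha hb hab).trans_lt (EReal.coe_lt_top _),
    fun x hx y hy a b ha hb hab => ?_⟩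
  simpa only [EReal.toReal_coe, smul_eq_mul] using
    EReal.toReal_le_toReal (hcombo hx hy ha hb hab) (hfbot _) (EReal.coe_ne_top _)

theorem ConvexOn.iInf_intrinsicInterior_add_le {V : Type*} [NormedAddCommGroup V]
    [NormedSpace ℝ V] [FiniteDimensional ℝ V] {s : Set V} {φ g : V → ℝ} (hφ : ConvexOn ℝ s φ)
    {x : V} (hx : x ∈ s) (hg : ContinuousAt g x) :
    ⨅ y ∈ intrinsicInterior ℝ s, ((g y + φ y : ℝ) : EReal) ≤ ((g x + φ x : ℝ) : EReal) := by
  obtain ⟨z, hz⟩ := Set.Nonempty.intrinsicInterior hφ.1 ⟨x, hx⟩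
  set bound : ℝ → ℝ := fun t => g (lineMap x z t) + ((1 - t) * φ x + t * φ z)
  have hbound : ∀ t ∈ Ioc (0 : ℝ) 1,
      ⨅ y ∈ intrinsicInterior ℝ s, ((g y + φ y : ℝ) : EReal) ≤ (bound t : EReal) := by
    intro t ht
    refine (iInf₂_le _ (hφ.1.lineMap_mem_intrinsicInterior hx hz ht)).trans ?_
    have := hφ.2 hx (intrinsicInterior_subset hz) (sub_nonneg.2 ht.2) ht.1.le (by ring)
    rw [← lineMap_apply_module, smul_eq_mul, smul_eq_mul] at this
    exact EReal.coe_le_coe_iff.2 (add_le_add le_rfl this)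
  have hlim : Tendsto bound (𝓝[>] 0) (𝓝 (g x + φ x)) := by
    have hg0 : ContinuousAt g (lineMap x z (0 : ℝ)) := by simpa using hg
    have hcont : ContinuousAt bound 0 :=
      (hg0.comp lineMap_continuous.continuousAt).add (by fun_prop)
    simpa [bound] using hcont.tendsto.mono_left nhdsWithin_le_nhds
  exact ge_of_tendsto ((continuous_coe_real_ereal.tendsto _).comp hlim)
    (eventually_of_mem (Ioc_mem_nhdsGT zero_lt_one) hbound)

/-- **Lemma.** To minimize the sum of a continuous function and a convex function
`f : ℝⁿ → (-∞,∞]`, it suffices to minimize over the relative interior of the domain of `f`. -/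
theorem inf_add_eq_inf_intrinsicInterior {n : ℕ}
    (g : (Fin n → ℝ) → ℝ) (hg : Continuous g)
    (f : (Fin n → ℝ) → EReal) (hfbot : ∀ x, f x ≠ ⊥)
    (hfconv : ∀ x y : Fin n → ℝ, ∀ t : ℝ, 0 ≤ t → t ≤ 1 →
      f (t • x + (1 - t) • y) ≤ (t : EReal) * f x + ((1 - t : ℝ) : EReal) * f y) :
    (⨅ x : Fin n → ℝ, ((g x : ℝ) : EReal) + f x)
      = ⨅ x ∈ intrinsicInterior ℝ {y : Fin n → ℝ | f y < ⊤}, (((g x : ℝ) : EReal) + f x) := by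
  set S := {y : Fin n → ℝ | f y < ⊤}
  have hcoe : ∀ y ∈ S, f y = (f y).toReal := fun y hy => (EReal.coe_toReal hy.ne (hfbot y)).symm
  refine le_antisymm (le_iInf₂ fun x _ => iInf_le _ x) (le_iInf fun x => ?_)
  by_cases hx : x ∈ S
  · calc ⨅ y ∈ intrinsicInterior ℝ S, ((g y : ℝ) : EReal) + f y
        = ⨅ y ∈ intrinsicInterior ℝ S, ((g y + (f y).toReal : ℝ) : EReal) :=
          biInf_congr fun y hy => by rw [EReal.coe_add, ← hcoe y (intrinsicInterior_subset hy)]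
      _ ≤ ((g x + (f x).toReal : ℝ) : EReal) :=
          (convexOn_toReal_setOf_lt_top hfbot hfconv).iInf_intrinsicInterior_add_le hx
            hg.continuousAt
      _ = g x + f x := by rw [EReal.coe_add, ← hcoe x hx]
  · rw [show f x = ⊤ from not_lt_top_iff.1 hx, EReal.add_top_of_ne_bot (EReal.coe_ne_bot _)]
    exact le_top
end

section
/- Let V be a real vector space, X ⊂ V and C ⊂ ℝᵏ nonempty convex sets, f : X × C → ℝ jointly convex, and h : V → ℝᵏ linear with h(X) ⊂ C. Suppose that inf over x ∈ X of f(x,z) + ν·(h(x) − z) is > −∞ for all ν ∈ ℝᵏ and z ∈ C. Then for every set K with h(X) ⊂ K ⊂ C, inf over x ∈ X of f(x, h(x)) equals inf over z ∈ K of sup over ν ∈ ℝᵏ of inf over x ∈ X of f(x,z) + ν·(h(x) − z). -/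
/-!
For `z ∈ C` and reals `r' < r ≤ f (x, h x)` on `X`, a multiplier `ν` with
`r' ≤ f (x, z) + ν (h x - z)` on `X` comes from separating `(z, r')` from the closure of the
convex set `{(h x, t) | f (x, z) ≤ t}`. The point is not in that closure: this is clear if
`z ∉ closure (h '' X)`, and otherwise joint convexity gives the exact-penalty bound
`r ≤ f (x, z) + c ‖h x - z‖`, by interpolating between `(x, z)` and a point `(x₀, w)` with
`h x₀` in the relative interior of `h '' X` and `w` near it, where `f x₀` is bounded above.
A non-vertical separating hyperplane yields `ν` directly; a vertical one yields a direction
that, scaled using the lower bound on `f (·, z)` (the hypothesis at `ν = 0`), works as well.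
-/

open Set Function Metric

section Curry

variable {𝕜 E F β : Type*} [Semiring 𝕜] [PartialOrder 𝕜] [AddCommMonoid E] [AddCommMonoid F]
  [AddCommMonoid β] [PartialOrder β] [Module 𝕜 E] [Module 𝕜 F] [SMul 𝕜 β]
  {s : Set E} {t : Set F} {f : E → F → β}

theorem ConvexOn.uncurry_left (hf : ConvexOn 𝕜 (s ×ˢ t) (uncurry f)) {x : E} (hx : x ∈ s) :
    ConvexOn 𝕜 t (f x) := by
  refine ⟨fun y₁ hy₁ y₂ hy₂ a b ha hb hab => ?_, fun y₁ hy₁ y₂ hy₂ a b ha hb hab => ?_⟩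
  · simpa [← add_smul, hab] using (hf.1 (mk_mem_prod hx hy₁) (mk_mem_prod hx hy₂) ha hb hab).2
  · simpa [← add_smul, hab] using hf.2 (mk_mem_prod hx hy₁) (mk_mem_prod hx hy₂) ha hb hab

theorem ConvexOn.uncurry_right (hf : ConvexOn 𝕜 (s ×ˢ t) (uncurry f)) {y : F} (hy : y ∈ t) :
    ConvexOn 𝕜 s (fun x => f x y) := by
  refine ⟨fun x₁ hx₁ x₂ hx₂ a b ha hb hab => ?_, fun x₁ hx₁ x₂ hx₂ a b ha hb hab => ?_⟩
  · simpa [← add_smul, hab] using (hf.1 (mk_mem_prod hx₁ hy) (mk_mem_prod hx₂ hy) ha hb hab).1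
  · simpa [← add_smul, hab] using hf.2 (mk_mem_prod hx₁ hy) (mk_mem_prod hx₂ hy) ha hb hab

end Curry

theorem exists_forall_le_add_mul {α : Type*} {X : Set α} {g a : α → ℝ} {m δ : ℝ}
    (hm : ∀ x ∈ X, m ≤ g x) (hδ : 0 < δ) (ha : ∀ x ∈ X, δ ≤ a x) (r : ℝ) :
    ∃ s : ℝ, ∀ x ∈ X, r ≤ g x + s * a x := by
  refine ⟨max ((r - m) / δ) 0, fun x hx => ?_⟩
  have hs : r - m ≤ max ((r - m) / δ) 0 * δ :=
    (div_le_iff₀ hδ).1 (le_max_left _ _)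
  nlinarith [hm x hx, ha x hx, le_max_right ((r - m) / δ) 0]

section

variable {W : Type*} [NormedAddCommGroup W] [NormedSpace ℝ W]

theorem exists_add_mem_of_mem_intrinsicInterior {S : Set W} {w₀ : W}
    (hw₀ : w₀ ∈ intrinsicInterior ℝ S) :
    ∃ ε > 0, ∀ v ∈ (affineSpan ℝ S).direction, ‖v‖ < ε → w₀ + v ∈ S := by
  obtain ⟨y, hy, rfl⟩ := mem_intrinsicInterior.1 hw₀
  obtain ⟨ε, hε, hball⟩ := Metric.isOpen_iff.1 isOpen_interior y hy
  refine ⟨ε, hε, fun v hv hvε => ?_⟩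
  have hmem : (y : W) + v ∈ affineSpan ℝ S := by
    simpa [add_comm] using AffineSubspace.vadd_mem_of_mem_direction hv y.2
  have hint := hball (show (⟨_, hmem⟩ : affineSpan ℝ S) ∈ ball y ε by
    simpa [Subtype.dist_eq, dist_eq_norm] using hvε)
  exact (interior_subset hint :)

theorem ConvexOn.exists_le_of_mem_intrinsicInterior [FiniteDimensional ℝ W] {S : Set W}
    {g : W → ℝ} (hg : ConvexOn ℝ S g) {w₀ : W} (hw₀ : w₀ ∈ intrinsicInterior ℝ S) :
    ∃ δ > 0, ∃ M, ∀ v ∈ (affineSpan ℝ S).direction, ‖v‖ ≤ δ → w₀ + v ∈ S ∧ g (w₀ + v) ≤ M := by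
  obtain ⟨ε, hε, hS⟩ := exists_add_mem_of_mem_intrinsicInterior hw₀
  set D := (affineSpan ℝ S).direction
  have hball : ball (0 : D) ε ⊆ D.subtype ⁻¹' ((fun w => w₀ + w) ⁻¹' S) := fun v hv =>
    hS v v.2 (by simpa using hv)
  have hG : ConvexOn ℝ (ball (0 : D) ε) (g ∘ (fun w => w₀ + w) ∘ D.subtype) :=
    ((hg.translate_right w₀).comp_linearMap D.subtype).subset hball (convex_ball 0 ε)
  obtain ⟨M, hM⟩ := (isCompact_closedBall (0 : D) (ε / 2)).bddAbove_image
    ((hG.continuousOn isOpen_ball).mono (closedBall_subset_ball (by linarith)))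
  refine ⟨ε / 2, by positivity, M, fun v hv hvδ => ⟨hS v hv (by linarith), ?_⟩⟩
  exact hM ⟨⟨v, hv⟩, by simpa using hvδ, rfl⟩

variable {V : Type*} [AddCommGroup V] [Module ℝ V]

theorem exists_dual_le_add_of_notMem_closure {X : Set V} {g : V → ℝ} (hg : ConvexOn ℝ X g)
    {m : ℝ} (hm : ∀ x ∈ X, m ≤ g x) (h : V →ₗ[ℝ] W) {z : W} {r' : ℝ}
    (hz : (z, r') ∉ closure (Prod.map h id '' {p : V × ℝ | p.1 ∈ X ∧ g p.1 ≤ p.2})) :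
    ∃ ν : StrongDual ℝ W, ∀ x ∈ X, r' ≤ g x + ν (h x - z) := by
  have hconv : Convex ℝ (Prod.map h id '' {p : V × ℝ | p.1 ∈ X ∧ g p.1 ≤ p.2}) := by
    have := hg.convex_epigraph.linear_image (h.prodMap LinearMap.id)
    rwa [LinearMap.coe_prodMap, LinearMap.id_coe] at this
  obtain ⟨φ, u, hsep, hu⟩ :=
    geometric_hahn_banach_closed_point hconv.closure isClosed_closure hz
  set ℓ := φ.comp (ContinuousLinearMap.inl ℝ W ℝ)
  set β := φ (0, 1)
  have hφ : ∀ w t, φ (w, t) = ℓ w + t * β := fun w t => by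
    rw [show (w, t) = (w, 0) + t • ((0 : W), (1 : ℝ)) by simp, map_add, map_smul, smul_eq_mul]
    rfl
  have hlt : ∀ x ∈ X, ∀ t, g x ≤ t → ℓ (h x) + t * β < u := fun x hx t ht => by
    rw [← hφ]
    exact hsep _ (subset_closure ⟨(x, t), ⟨hx, ht⟩, rfl⟩)
  rw [hφ] at hu
  rcases lt_trichotomy β 0 with hβ | hβ | hβ
  · refine ⟨β⁻¹ • ℓ, fun x hx => ?_⟩
    have hx' : (g x - r') * β < ℓ z - ℓ (h x) := by linarith [hlt x hx _ le_rfl]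
    have := (div_lt_iff_of_neg hβ).2 hx'
    have hinv : β⁻¹ * (ℓ (h x) - ℓ z) = -((ℓ z - ℓ (h x)) / β) := by ring
    simp only [smul_apply, map_sub, smul_eq_mul]
    linarith
  · -- vertical hyperplane: `ℓ` alone separates `h '' X` from `z`, and a large multiple wins
    have hu' : u < ℓ z := by simpa [hβ] using hu
    have hδ : ∀ x ∈ X, ℓ z - u ≤ ℓ z - ℓ (h x) := fun x hx => by
      have := hlt x hx _ le_rfl
      rw [hβ, mul_zero, add_zero] at this
      linarith
    obtain ⟨s, hs⟩ := exists_forall_le_add_mul hm (sub_pos.2 hu') hδ r'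
    refine ⟨-s • ℓ, fun x hx => ?_⟩
    simp only [smul_apply, map_sub, smul_eq_mul]
    linarith [hs x hx]
  · refine ⟨0, fun x hx => absurd (hlt x hx _ (le_max_left (g x) ((u - ℓ (h x)) / β))) ?_⟩
    have := (div_le_iff₀ hβ).1 (le_max_right (g x) ((u - ℓ (h x)) / β))
    linarith

variable {X : Set V} {C : Set W} {f : V → W → ℝ} {h : V →ₗ[ℝ] W} {r : ℝ}

theorem le_add_mul_norm_of_forall_le {x₀ : V} (hx₀ : x₀ ∈ X) {δ M : ℝ} (hδ : 0 < δ)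
    (hM : ∀ v ∈ (affineSpan ℝ (h '' X)).direction, ‖v‖ ≤ δ → h x₀ + v ∈ C ∧ f x₀ (h x₀ + v) ≤ M)
    (hX : Convex ℝ X) (hf : ConvexOn ℝ (X ×ˢ C) (uncurry f)) (hr : ∀ x ∈ X, r ≤ f x (h x))
    {z : W} (hz : z ∈ C) (hzX : z ∈ affineSpan ℝ (h '' X)) {x : V} (hx : x ∈ X) :
    r ≤ f x z + (M - r) / δ * ‖h x - z‖ := by
  rcases eq_or_ne (h x) z with rfl | hxz
  · simpa using hr x hx
  set d := ‖h x - z‖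
  have hd : 0 < d := norm_pos_iff.2 (sub_ne_zero.2 hxz)
  set l := δ / d
  have hl : 0 < l := by positivity
  have hv : l • (h x - z) ∈ (affineSpan ℝ (h '' X)).direction :=
    Submodule.smul_mem _ _ (AffineSubspace.vsub_mem_direction
      (subset_affineSpan ℝ _ (mem_image_of_mem h hx)) hzX)
  obtain ⟨hvC, hvM⟩ := hM _ hv (by simp [d, l, norm_smul, abs_of_pos hδ, hd.ne'])
  -- with weights `1 : l`, the combination of `(x₀, h x₀ + l • (h x - z))` and `(x, z)`
  -- is a point `(y, h y)` of the graph of `h`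
  set a := 1 / (1 + l)
  set b := l / (1 + l)
  have hl1 : 1 + l ≠ 0 := by positivity
  have hab : a + b = 1 := by simp only [a, b]; field_simp
  have hgraph : a • (h x₀ + l • (h x - z)) + b • z = h (a • x₀ + b • x) := by
    simp only [map_add, map_smul, a, b]
    field_simp
    module
  have hconv := hf.2 (mk_mem_prod hx₀ hvC) (mk_mem_prod hx hz) (by positivity) (by positivity) hab
  simp only [Prod.smul_mk, Prod.mk_add_mk, uncurry_apply_pair, hgraph, smul_eq_mul] at hconv
  have key : r ≤ a * M + b * f x z :=
    (hr _ (hX hx₀ hx (by positivity) (by positivity) hab)).trans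
      (hconv.trans (by gcongr))
  have hscaled : l * (r - f x z) ≤ M - r := by
    have h1l : (1 + l) * (a * M + b * f x z) = M + l * f x z := by
      simp only [a, b]; field_simp
    nlinarith [mul_le_mul_of_nonneg_left key (by positivity : (0 : ℝ) ≤ 1 + l)]
  calc r = f x z + (l * (r - f x z)) * (d / δ) := by simp only [l]; field_simp; ring
    _ ≤ f x z + (M - r) * (d / δ) := by gcongr
    _ = f x z + (M - r) / δ * d := by ring

theorem exists_le_add_mul_norm [FiniteDimensional ℝ W] (hX : Convex ℝ X)
    (hf : ConvexOn ℝ (X ×ˢ C) (uncurry f)) (hhX : h '' X ⊆ C) (hr : ∀ x ∈ X, r ≤ f x (h x))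
    {z : W} (hz : z ∈ C) (hzX : z ∈ closure (h '' X)) :
    ∃ c : ℝ, ∀ x ∈ X, r ≤ f x z + c * ‖h x - z‖ := by
  have hconv : Convex ℝ (h '' X) := hX.linear_image h
  obtain ⟨w₀, hw₀⟩ := (closure_nonempty_iff.1 ⟨z, hzX⟩).intrinsicInterior hconv
  obtain ⟨x₀, hx₀, rfl⟩ := intrinsicInterior_subset hw₀
  obtain ⟨δ, hδ, M, hM⟩ :=
    ((hf.uncurry_left hx₀).subset hhX hconv).exists_le_of_mem_intrinsicInterior hw₀
  have hzA : z ∈ affineSpan ℝ (h '' X) :=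
    closure_minimal (subset_affineSpan ℝ _) (AffineSubspace.closed_of_finiteDimensional _) hzX
  exact ⟨(M - r) / δ, fun x hx => le_add_mul_norm_of_forall_le hx₀ hδ
    (fun v hv hvδ => (hM v hv hvδ).imp_left (hhX ·)) hX hf hr hz hzA hx⟩

theorem mk_notMem_closure_image_epigraph [FiniteDimensional ℝ W] (hX : Convex ℝ X)
    (hf : ConvexOn ℝ (X ×ˢ C) (uncurry f)) (hhX : h '' X ⊆ C) (hr : ∀ x ∈ X, r ≤ f x (h x))
    {z : W} (hz : z ∈ C) {r' : ℝ} (hr' : r' < r) :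
    (z, r') ∉ closure (Prod.map h id '' {p : V × ℝ | p.1 ∈ X ∧ f p.1 z ≤ p.2}) := by
  intro hmem
  by_cases hzX : z ∈ closure (h '' X)
  · obtain ⟨c, hc⟩ := exists_le_add_mul_norm hX hf hhX hr hz hzX
    have hclosed : IsClosed {p : W × ℝ | r ≤ p.2 + c * ‖p.1 - z‖} :=
      isClosed_le continuous_const (by fun_prop)
    have hsub : Prod.map h id '' {p : V × ℝ | p.1 ∈ X ∧ f p.1 z ≤ p.2} ⊆
        {p : W × ℝ | r ≤ p.2 + c * ‖p.1 - z‖} := by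
      rintro _ ⟨q, ⟨hqX, hq⟩, rfl⟩
      exact (hc q.1 hqX).trans (by simpa using hq)
    have : r ≤ r' + c * ‖z - z‖ := closure_minimal hsub hclosed hmem
    simp only [sub_self, norm_zero, mul_zero, add_zero] at this
    linarith
  · refine hzX (map_mem_closure continuous_fst hmem ?_)
    rintro _ ⟨q, ⟨hqX, -⟩, rfl⟩
    exact mem_image_of_mem h hqX

end

theorem ContinuousLinearMap.sum_apply_single_mul {ι : Type*} [Fintype ι] [DecidableEq ι]
    (ν : StrongDual ℝ (ι → ℝ)) (w : ι → ℝ) : ∑ i, ν (Pi.single i 1) * w i = ν w := by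
  conv_rhs => rw [← Finset.univ_sum_single w]
  rw [map_sum]
  refine Finset.sum_congr rfl fun i _ => ?_
  rw [show Pi.single i (w i) = w i • Pi.single i (1 : ℝ) by
    rw [← Pi.single_smul, smul_eq_mul, mul_one], map_smul, smul_eq_mul, mul_comm]

theorem EReal.coe_le_of_coe_lt_biInf {ι : Type*} {s : Set ι} {g : ι → ℝ} {a : ℝ}
    (ha : (a : EReal) < ⨅ i ∈ s, (g i : EReal)) {i : ι} (hi : i ∈ s) : a ≤ g i :=
  EReal.coe_le_coe_iff.1 (ha.le.trans (iInf₂_le i hi))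

theorem convex_min_disintegration_general {V : Type*} [AddCommGroup V] [Module ℝ V] {k : ℕ}
    (X : Set V) (hXconv : Convex ℝ X)
    (C : Set (Fin k → ℝ)) (hCconv : Convex ℝ C)
    (f : V → (Fin k → ℝ) → ℝ)
    (hf : ∀ x₁ ∈ X, ∀ x₂ ∈ X, ∀ z₁ ∈ C, ∀ z₂ ∈ C, ∀ t : ℝ, 0 ≤ t → t ≤ 1 →
      f (t • x₁ + (1 - t) • x₂) (t • z₁ + (1 - t) • z₂) ≤ t * f x₁ z₁ + (1 - t) * f x₂ z₂)
    (h : V →ₗ[ℝ] (Fin k → ℝ)) (hhX : h '' X ⊆ C)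
    (hSlater : ∀ (ν : Fin k → ℝ), ∀ z ∈ C,
      (⊥ : EReal) < ⨅ x ∈ X, ((f x z + ∑ i, ν i * (h x i - z i) : ℝ) : EReal))
    (K : Set (Fin k → ℝ)) (hK1 : h '' X ⊆ K) (hK2 : K ⊆ C) :
    (⨅ x ∈ X, ((f x (h x) : ℝ) : EReal))
      = ⨅ z ∈ K, ⨆ ν : Fin k → ℝ, ⨅ x ∈ X,
          ((f x z + ∑ i, ν i * (h x i - z i) : ℝ) : EReal) := by
  have hfc : ConvexOn ℝ (X ×ˢ C) (uncurry f) := by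
    refine ⟨hXconv.prod hCconv, ?_⟩
    rintro ⟨x₁, z₁⟩ ⟨hx₁, hz₁⟩ ⟨x₂, z₂⟩ ⟨hx₂, hz₂⟩ a b ha hb hab
    obtain rfl : b = 1 - a := by linarith
    simpa using hf x₁ hx₁ x₂ hx₂ z₁ hz₁ z₂ hz₂ a ha (by linarith)
  refine le_antisymm (le_iInf₂ fun z hz => ?_) (le_iInf₂ fun x hx => ?_)
  · obtain ⟨m, -, hm⟩ := EReal.lt_iff_exists_real_btwn.1 (by simpa using hSlater 0 z (hK2 hz))
    refine EReal.ge_of_forall_gt_iff_ge.1 fun r' hr' => ?_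
    obtain ⟨r, hr'r, hr⟩ := EReal.lt_iff_exists_real_btwn.1 hr'
    obtain ⟨ν, hν⟩ := exists_dual_le_add_of_notMem_closure (hfc.uncurry_right (hK2 hz))
      (fun x hx => EReal.coe_le_of_coe_lt_biInf hm hx) h
      (mk_notMem_closure_image_epigraph hXconv hfc hhX
        (fun x hx => EReal.coe_le_of_coe_lt_biInf hr hx) (hK2 hz) (EReal.coe_lt_coe_iff.1 hr'r))
    refine le_iSup_of_le (fun i => ν (Pi.single i 1)) (le_iInf₂ fun x hx => ?_)
    rw [show ∑ i, ν (Pi.single i 1) * (h x i - z i) = ν (h x - z) from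
      ν.sum_apply_single_mul (h x - z)]
    exact_mod_cast hν x hx
  · refine iInf₂_le_of_le (h x) (hK1 (mem_image_of_mem h hx))
      (iSup_le fun ν => iInf₂_le_of_le x hx ?_)
    simp

/-- **Lemma (constrained disintegration of a convex minimization problem).** -/
theorem convex_min_disintegration {V : Type*} [AddCommGroup V] [Module ℝ V] {k : ℕ}
    (X : Set V) (hXne : X.Nonempty) (hXconv : Convex ℝ X)
    (C : Set (Fin k → ℝ)) (hCne : C.Nonempty) (hCconv : Convex ℝ C)
    (f : V → (Fin k → ℝ) → ℝ)
    (hf : ∀ x₁ ∈ X, ∀ x₂ ∈ X, ∀ z₁ ∈ C, ∀ z₂ ∈ C, ∀ t : ℝ, 0 ≤ t → t ≤ 1 →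
      f (t • x₁ + (1 - t) • x₂) (t • z₁ + (1 - t) • z₂) ≤ t * f x₁ z₁ + (1 - t) * f x₂ z₂)
    (h : V →ₗ[ℝ] (Fin k → ℝ)) (hhX : h '' X ⊆ C)
    (hSlater : ∀ (ν : Fin k → ℝ), ∀ z ∈ C,
      (⊥ : EReal) < ⨅ x ∈ X, ((f x z + ∑ i, ν i * (h x i - z i) : ℝ) : EReal))
    (K : Set (Fin k → ℝ)) (hK1 : h '' X ⊆ K) (hK2 : K ⊆ C) :
    (⨅ x ∈ X, ((f x (h x) : ℝ) : EReal))
      = ⨅ z ∈ K, ⨆ ν : Fin k → ℝ, ⨅ x ∈ X,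
          ((f x z + ∑ i, ν i * (h x i - z i) : ℝ) : EReal) :=
  convex_min_disintegration_general X hXconv C hCconv f hf h hhX hSlater K hK1 hK2
end

section
/- Let V be a real vector space, X ⊂ V and C ⊂ ℝᵏ nonempty convex sets, f : X × C → ℝ jointly convex, and h : V → ℝᵏ linear with h(X) ⊂ C. Suppose that inf over x ∈ X of f(x,z) + ν·(h(x) − z) is > −∞ for all ν ∈ ℝᵏ and z ∈ C. Define F : ℝᵏ → (−∞,∞] by F(z) = sup over ν ∈ ℝᵏ of inf over x ∈ X of f(x,z) + ν·(h(x) − z) for z ∈ C, and F(z) = ∞ for z ∉ C. Then F is convex on ℝᵏ, F(z) < ∞ for every z ∈ h(X), and F(z) = ∞ for every z ∈ C that lies outside the closure of h(X). -/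
open Set

/-! For fixed `ν` the Lagrangian `f x z + ν ⬝ᵥ (h x - z)` is jointly convex in `(x, z)`, so its
infimum over `x ∈ X` is a convex function of `z ∈ C`, finite by the Slater-type hypothesis; `F` is
the supremum of these functions extended by `⊤` off `C`, hence convex. At `z = h x` the penalty
term vanishes, so `F (h x) ≤ f x (h x)`. If `z ∈ C` lies outside the closure of `h '' X`, a
hyperplane separates it: `ν ⬝ᵥ (h x - z) ≥ δ > 0` on `X`, and replacing `ν` by `c • ν` raises the
infimum by at least `c * δ`, so `F z = ⊤`. -/

theorem convexOn_ciInf_of_convexOn_prod {E F : Type*} [AddCommGroup E] [Module ℝ E]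
    [AddCommGroup F] [Module ℝ F] {s : Set E} {t : Set F} [Nonempty s] {g : E × F → ℝ}
    (hg : ConvexOn ℝ (s ×ˢ t) g) (ht : Convex ℝ t)
    (hbdd : ∀ z ∈ t, BddBelow (range fun x : s => g (x, z))) :
    ConvexOn ℝ t fun z => ⨅ x : s, g (x, z) := by
  refine ⟨ht, fun z₁ hz₁ z₂ hz₂ a b ha hb hab => le_of_forall_pos_le_add fun ε hε => ?_⟩
  obtain ⟨x₁, hx₁⟩ := exists_lt_of_ciInf_lt (lt_add_of_pos_right (⨅ x : s, g (x, z₁)) hε)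
  obtain ⟨x₂, hx₂⟩ := exists_lt_of_ciInf_lt (lt_add_of_pos_right (⨅ x : s, g (x, z₂)) hε)
  have hp₁ : ((x₁ : E), z₁) ∈ s ×ˢ t := ⟨x₁.2, hz₁⟩
  have hp₂ : ((x₂ : E), z₂) ∈ s ×ˢ t := ⟨x₂.2, hz₂⟩
  have hx : a • (x₁ : E) + b • (x₂ : E) ∈ s := (hg.1 hp₁ hp₂ ha hb hab).1
  calc ⨅ x : s, g (x, a • z₁ + b • z₂)
      ≤ g (a • ((x₁ : E), z₁) + b • ((x₂ : E), z₂)) :=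
        ciInf_le (hbdd _ (ht hz₁ hz₂ ha hb hab)) ⟨_, hx⟩
    _ ≤ a • g (x₁, z₁) + b • g (x₂, z₂) := hg.2 hp₁ hp₂ ha hb hab
    _ ≤ a • ((⨅ x : s, g (x, z₁)) + ε) + b • ((⨅ x : s, g (x, z₂)) + ε) := by
        gcongr
    _ = a • (⨅ x : s, g (x, z₁)) + b • (⨅ x : s, g (x, z₂)) + ε := by
        simp only [smul_eq_mul]
        linear_combination ε * hab

theorem EReal.coe_iInf_subtype {α : Type*} {s : Set α} [Nonempty s] {g : α → ℝ}
    (hg : BddBelow (range fun x : s => g x)) :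
    ((⨅ x : s, g x : ℝ) : EReal) = ⨅ x ∈ s, (g x : EReal) := by
  rw [← iInf_subtype'']
  exact Monotone.map_ciInf_of_continuousAt continuous_coe_real_ereal.continuousAt
    EReal.coe_strictMono.monotone hg

theorem bddBelow_range_of_bot_lt_biInf {α : Type*} {s : Set α} {g : α → ℝ}
    (h : ⊥ < ⨅ x ∈ s, (g x : EReal)) : BddBelow (range fun x : s => g x) := by
  obtain ⟨r, -, hr⟩ := EReal.lt_iff_exists_real_btwn.1 h
  exact ⟨r, forall_mem_range.2 fun x => EReal.coe_le_coe_iff.1 (hr.le.trans (biInf_le _ x.2))⟩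

theorem EReal.iSup_coe_eq_top {ι : Type*} {φ : ι → ℝ} (h : ¬BddAbove (range φ)) :
    ⨆ i, (φ i : EReal) = ⊤ := by
  refine (EReal.eq_top_iff_forall_lt _).2 fun y => ?_
  obtain ⟨_, ⟨i, rfl⟩, hi⟩ := not_bddAbove_iff.1 h y
  exact (EReal.coe_lt_coe_iff.2 hi).trans_le (le_iSup (fun i => (φ i : EReal)) i)

theorem EReal.coe_mul_ne_bot {t : ℝ} (ht : 0 ≤ t) {a : EReal} (ha : a ≠ ⊥) : (t : EReal) * a ≠ ⊥ :=
  (EReal.mul_ne_bot _ _).2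
    ⟨.inl (EReal.coe_ne_bot t), .inr ha, .inl (EReal.coe_ne_top t), .inl (EReal.coe_nonneg.2 ht)⟩

theorem iSup_convexOn_extend_top_le {E ι : Type*} [AddCommGroup E] [Module ℝ E] [Nonempty ι]
    {C : Set E} {φ : ι → E → ℝ} (hφ : ∀ i, ConvexOn ℝ C (φ i)) {F : E → EReal}
    (hF₁ : ∀ z ∈ C, F z = ⨆ i, (φ i z : EReal)) (hF₂ : ∀ z ∉ C, F z = ⊤)
    (z₁ z₂ : E) {t : ℝ} (ht₀ : 0 ≤ t) (ht₁ : t ≤ 1) :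
    F (t • z₁ + (1 - t) • z₂) ≤ (t : EReal) * F z₁ + ((1 - t : ℝ) : EReal) * F z₂ := by
  have hF_ne_bot : ∀ z, F z ≠ ⊥ := fun z => by
    by_cases hz : z ∈ C
    · rw [hF₁ z hz]
      exact ne_bot_of_le_ne_bot (EReal.coe_ne_bot _)
        (le_iSup (fun i => (φ i z : EReal)) (Classical.arbitrary ι))
    · rw [hF₂ z hz]
      exact top_ne_bot
  rcases ht₀.eq_or_lt with rfl | ht₀'
  · simp
  rcases ht₁.eq_or_lt with rfl | ht₁'
  · simp
  by_cases hz₁ : z₁ ∈ C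
  swap
  · rw [hF₂ z₁ hz₁, EReal.mul_top_of_pos (EReal.coe_pos.2 ht₀'),
      EReal.top_add_of_ne_bot (EReal.coe_mul_ne_bot (by linarith) (hF_ne_bot z₂))]
    exact le_top
  by_cases hz₂ : z₂ ∈ C
  swap
  · rw [hF₂ z₂ hz₂, EReal.mul_top_of_pos (EReal.coe_pos.2 (by linarith)),
      EReal.add_top_of_ne_bot (EReal.coe_mul_ne_bot ht₀ (hF_ne_bot z₁))]
    exact le_top
  have hC := (hφ (Classical.arbitrary ι)).1
  rw [hF₁ _ (hC hz₁ hz₂ ht₀ (by linarith) (by ring)), hF₁ _ hz₁, hF₁ _ hz₂]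
  refine iSup_le fun i => ?_
  calc (φ i (t • z₁ + (1 - t) • z₂) : EReal)
      ≤ ((t * φ i z₁ + (1 - t) * φ i z₂ : ℝ) : EReal) :=
        EReal.coe_le_coe_iff.2 ((hφ i).2 hz₁ hz₂ ht₀ (by linarith) (by ring))
    _ = (t : EReal) * φ i z₁ + ((1 - t : ℝ) : EReal) * φ i z₂ := by
        rw [EReal.coe_add, EReal.coe_mul, EReal.coe_mul]
    _ ≤ (t : EReal) * (⨆ i, (φ i z₁ : EReal)) + ((1 - t : ℝ) : EReal) * ⨆ i, (φ i z₂ : EReal) := by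
        gcongr <;> exact le_iSup (fun i => (φ i _ : EReal)) i

theorem exists_dotProduct_sub_ge_of_notMem_closure {ι : Type*} [Fintype ι] [DecidableEq ι]
    {S : Set (ι → ℝ)} (hS : Convex ℝ S) {z : ι → ℝ} (hz : z ∉ closure S) :
    ∃ ν : ι → ℝ, ∃ δ > 0, ∀ w ∈ S, δ ≤ ν ⬝ᵥ (w - z) := by
  obtain ⟨φ, u, hφz, hφS⟩ := geometric_hahn_banach_point_closed hS.closure isClosed_closure hz
  set ν := (dotProductEquiv ℝ ι).symm φ.toLinearMap
  have hν : ∀ w, ν ⬝ᵥ w = φ w := fun w =>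
    LinearMap.congr_fun ((dotProductEquiv ℝ ι).apply_symm_apply φ.toLinearMap) w
  refine ⟨ν, u - φ z, sub_pos.2 hφz, fun w hw => ?_⟩
  rw [dotProduct_sub, hν, hν]
  linarith [hφS w (subset_closure hw)]

section Lagrangian

variable {V ι : Type*} [AddCommGroup V] [Module ℝ V] [Fintype ι]

def lagrangian (f : V → (ι → ℝ) → ℝ) (h : V →ₗ[ℝ] (ι → ℝ)) (ν z : ι → ℝ) (x : V) : ℝ :=
  f x z + ν ⬝ᵥ (h x - z)

/-- A real infimum, so it is the dual function only where the Lagrangian is bounded below on `X`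
(elsewhere it takes the junk value of `⨅`). -/
noncomputable def dualFunction (X : Set V) (f : V → (ι → ℝ) → ℝ) (h : V →ₗ[ℝ] (ι → ℝ))
    (ν z : ι → ℝ) : ℝ :=
  ⨅ x : X, lagrangian f h ν z x

variable {X : Set V} {C : Set (ι → ℝ)} {f : V → (ι → ℝ) → ℝ} {h : V →ₗ[ℝ] (ι → ℝ)}

@[simp]
theorem lagrangian_self (ν : ι → ℝ) (x : V) : lagrangian f h ν (h x) x = f x (h x) := by
  simp [lagrangian]

theorem lagrangian_smul (c : ℝ) (ν z : ι → ℝ) (x : V) :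
    lagrangian f h (c • ν) z x = lagrangian f h 0 z x + c * ν ⬝ᵥ (h x - z) := by
  simp [lagrangian, smul_dotProduct, mul_sub]

theorem convexOn_lagrangian (hf : ConvexOn ℝ (X ×ˢ C) fun p => f p.1 p.2) (ν : ι → ℝ) :
    ConvexOn ℝ (X ×ˢ C) fun p => lagrangian f h ν p.2 p.1 := by
  classical
  let ℓ : V × (ι → ℝ) →ₗ[ℝ] ℝ :=
    dotProductEquiv ℝ ι ν ∘ₗ (h ∘ₗ LinearMap.fst ℝ V (ι → ℝ) - LinearMap.snd ℝ V (ι → ℝ))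
  exact (hf.add (ℓ.convexOn hf.1)).congr fun p _ => rfl

theorem convexOn_dualFunction [Nonempty X] (hf : ConvexOn ℝ (X ×ˢ C) fun p => f p.1 p.2)
    (hC : Convex ℝ C) (ν : ι → ℝ)
    (hbdd : ∀ z ∈ C, BddBelow (range fun x : X => lagrangian f h ν z x)) :
    ConvexOn ℝ C (dualFunction X f h ν) :=
  convexOn_ciInf_of_convexOn_prod (convexOn_lagrangian hf ν) hC hbdd

theorem not_bddAbove_dualFunction [Nonempty X] {z ν : ι → ℝ} {δ : ℝ} (hδ : 0 < δ)
    (hsep : ∀ x ∈ X, δ ≤ ν ⬝ᵥ (h x - z))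
    (hbdd : BddBelow (range fun x : X => lagrangian f h 0 z x)) :
    ¬BddAbove (range fun ν => dualFunction X f h ν z) := by
  have hgrowth : ∀ c : ℝ, 0 ≤ c → dualFunction X f h 0 z + c * δ ≤ dualFunction X f h (c • ν) z :=
    fun c hc => le_ciInf fun x => by
      rw [lagrangian_smul]
      gcongr
      exacts [ciInf_le hbdd x, hsep x x.2]
  refine not_bddAbove_iff.2 fun y => ?_
  obtain ⟨n, hn⟩ := exists_nat_gt ((y - dualFunction X f h 0 z) / δ)
  refine ⟨_, ⟨(n : ℝ) • ν, rfl⟩, ?_⟩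
  calc y < dualFunction X f h 0 z + n * δ := by
        rw [div_lt_iff₀ hδ] at hn
        linarith
    _ ≤ _ := hgrowth n n.cast_nonneg

end Lagrangian

theorem dual_value_function_properties_general {V : Type*} [AddCommGroup V] [Module ℝ V] {k : ℕ}
    (X : Set V) (hXne : X.Nonempty) (hXconv : Convex ℝ X)
    (C : Set (Fin k → ℝ)) (hCconv : Convex ℝ C)
    (f : V → (Fin k → ℝ) → ℝ)
    (hf : ∀ x₁ ∈ X, ∀ x₂ ∈ X, ∀ z₁ ∈ C, ∀ z₂ ∈ C, ∀ t : ℝ, 0 ≤ t → t ≤ 1 →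
      f (t • x₁ + (1 - t) • x₂) (t • z₁ + (1 - t) • z₂) ≤ t * f x₁ z₁ + (1 - t) * f x₂ z₂)
    (h : V →ₗ[ℝ] (Fin k → ℝ)) (hhX : h '' X ⊆ C)
    (hSlater : ∀ (ν : Fin k → ℝ), ∀ z ∈ C,
      (⊥ : EReal) < ⨅ x ∈ X, ((f x z + ∑ i, ν i * (h x i - z i) : ℝ) : EReal))
    (F : (Fin k → ℝ) → EReal)
    (hF1 : ∀ z ∈ C, F z = ⨆ ν : Fin k → ℝ, ⨅ x ∈ X,
      ((f x z + ∑ i, ν i * (h x i - z i) : ℝ) : EReal))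
    (hF2 : ∀ z ∉ C, F z = ⊤) :
    (∀ z₁ z₂ : Fin k → ℝ, ∀ t : ℝ, 0 ≤ t → t ≤ 1 →
        F (t • z₁ + (1 - t) • z₂) ≤ (t : EReal) * F z₁ + ((1 - t : ℝ) : EReal) * F z₂)
      ∧ (∀ z ∈ h '' X, F z < ⊤)
      ∧ (∀ z ∈ C, z ∉ closure (h '' X) → F z = ⊤) := by
  have : Nonempty X := hXne.to_subtype
  have hF1' : ∀ z ∈ C, F z = ⨆ ν, ⨅ x ∈ X, (lagrangian f h ν z x : EReal) := hF1
  have hbdd : ∀ ν, ∀ z ∈ C, BddBelow (range fun x : X => lagrangian f h ν z x) :=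
    fun ν z hz => bddBelow_range_of_bot_lt_biInf (hSlater ν z hz)
  have hF : ∀ z ∈ C, F z = ⨆ ν, (dualFunction X f h ν z : EReal) := fun z hz => by
    rw [hF1' z hz]
    exact iSup_congr fun ν => (EReal.coe_iInf_subtype (hbdd ν z hz)).symm
  have hfconv : ConvexOn ℝ (X ×ˢ C) fun p => f p.1 p.2 :=
    ⟨hXconv.prod hCconv, fun p hp q hq a b ha hb hab => by
      obtain rfl : b = 1 - a := by linarith
      exact hf _ hp.1 _ hq.1 _ hp.2 _ hq.2 a ha (by linarith)⟩
  refine ⟨fun z₁ z₂ t ht₀ ht₁ => iSup_convexOn_extend_top_le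
      (fun ν => convexOn_dualFunction hfconv hCconv ν (hbdd ν)) hF hF2 z₁ z₂ ht₀ ht₁, ?_, ?_⟩
  · rintro _ ⟨x, hx, rfl⟩
    rw [hF1' _ (hhX (mem_image_of_mem h hx))]
    refine lt_of_le_of_lt (iSup_le fun ν => ?_) (EReal.coe_lt_top (f x (h x)))
    simpa using biInf_le (fun y => (lagrangian f h ν (h x) y : EReal)) hx
  · intro z hz hzcl
    obtain ⟨ν, δ, hδ, hsep⟩ :=
      exists_dotProduct_sub_ge_of_notMem_closure (hXconv.linear_image h) hzcl
    rw [hF z hz]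
    exact EReal.iSup_coe_eq_top
      (not_bddAbove_dualFunction hδ (fun x hx => hsep _ (mem_image_of_mem h hx)) (hbdd 0 z hz))

/-- **Properties of the dual value function `F`.** With
`F(z) = sup_ν inf_{x ∈ X} {f(x,z) + ν·(h(x) - z)}` for `z ∈ C` and `F(z) = ∞` otherwise,
`F` is convex on `ℝᵏ`, finite on `h(X)`, and equal to `∞` on `C \ closure (h(X))`. -/
theorem dual_value_function_properties {V : Type*} [AddCommGroup V] [Module ℝ V] {k : ℕ}
    (X : Set V) (hXne : X.Nonempty) (hXconv : Convex ℝ X)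
    (C : Set (Fin k → ℝ)) (hCne : C.Nonempty) (hCconv : Convex ℝ C)
    (f : V → (Fin k → ℝ) → ℝ)
    (hf : ∀ x₁ ∈ X, ∀ x₂ ∈ X, ∀ z₁ ∈ C, ∀ z₂ ∈ C, ∀ t : ℝ, 0 ≤ t → t ≤ 1 →
      f (t • x₁ + (1 - t) • x₂) (t • z₁ + (1 - t) • z₂) ≤ t * f x₁ z₁ + (1 - t) * f x₂ z₂)
    (h : V →ₗ[ℝ] (Fin k → ℝ)) (hhX : h '' X ⊆ C)
    (hSlater : ∀ (ν : Fin k → ℝ), ∀ z ∈ C,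
      (⊥ : EReal) < ⨅ x ∈ X, ((f x z + ∑ i, ν i * (h x i - z i) : ℝ) : EReal))
    (F : (Fin k → ℝ) → EReal)
    (hF1 : ∀ z ∈ C, F z = ⨆ ν : Fin k → ℝ, ⨅ x ∈ X,
      ((f x z + ∑ i, ν i * (h x i - z i) : ℝ) : EReal))
    (hF2 : ∀ z ∉ C, F z = ⊤) :
    (∀ z₁ z₂ : Fin k → ℝ, ∀ t : ℝ, 0 ≤ t → t ≤ 1 →
        F (t • z₁ + (1 - t) • z₂) ≤ (t : EReal) * F z₁ + ((1 - t : ℝ) : EReal) * F z₂)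
      ∧ (∀ z ∈ h '' X, F z < ⊤)
      ∧ (∀ z ∈ C, z ∉ closure (h '' X) → F z = ⊤) :=
  dual_value_function_properties_general X hXne hXconv C hCconv f hf h hhX hSlater F hF1 hF2
end
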